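/- The semiring B0 satisfies the identity xy + zy + zt ≤ xt; that is, for all a, b, c, d ∈ B0, (ab + cb + cd) + ad = ab + cb + cd. -/

import Mathlib

/-- An additively idempotent semiring: `(S,+)` is a semilattice,
`(S,·)` is a semigroup, and multiplication distributes over addition. -/
class AISemiring (S : Type u) extends Add S, Mul S where
  add_comm' : ∀ a b : S, a + b = b + a
  add_assoc' : ∀ a b c : S, a + b + c = a + (b + c)
  add_idem' : ∀ a : S, a + a = a
  mul_assoc' : ∀ a b c : S, a * b * c = a * (b * c)
  left_distrib' : ∀ a b c : S, a * (b + c) = a * b + a * c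
  right_distrib' : ∀ a b c : S, (a + b) * c = a * c + b * c

/-- The term `x₁ y z₁` where the outer factors `x₁`, `z₁` may be absent. -/
def optTerm {S : Type u} [Mul S] : Option S → S → Option S → S
  | none, y, none => y
  | some a, y, none => a * y
  | none, y, some b => y * b
  | some a, y, some b => a * y * b

/-- The system Σ of ai-semiring identities (2.1)–(2.6);
`p ≤ q` abbreviates `p + q ≈ p`. -/
def SatSigma (S : Type u) [AISemiring S] : Prop :=
  (∀ x : S, x * x = x * x * x) ∧
  (∀ x y : S, x * x * (y * y) = y * y * (x * x)) ∧
  (∀ x y : S, x * x * (y * y) = x * y * x) ∧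
  (∀ x y : S, x + y * y = x * x * (y * y)) ∧
  (∀ x y : S, x * y + x = x * (y * y)) ∧
  (∀ x y : S, y * x + x = y * y * x) ∧
  (∀ x y z t : S, (x * y + z * y + z * t) + x * t = x * y + z * y + z * t) ∧
  (∀ (x₁ z₁ x₂ z₂ : Option S) (y : S),
    (optTerm x₁ y z₁ + optTerm x₂ y z₂) + optTerm x₁ y z₂ =
      optTerm x₁ y z₁ + optTerm x₂ y z₂)

/-- A word over `X`: a nonempty finite sequence of letters (head and tail). -/
abbrev Word (X : Type v) : Type v := X × List X

/-- The list of letters of a word. -/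
def Word.letters {X : Type v} (w : Word X) : List X := w.1 :: w.2

/-- Value of a word in an ai-semiring under a valuation. -/
def Word.eval {X : Type v} {S : Type u} [AISemiring S] (val : X → S) (w : Word X) : S :=
  (w.2.map val).foldl (· * ·) (val w.1)

/-- A polynomial over `X`: a finite nonempty collection of words. -/
abbrev SrPoly (X : Type v) : Type v := Word X × List (Word X)

/-- The words (summands) of a polynomial. -/
def SrPoly.words {X : Type v} (p : SrPoly X) : List (Word X) := p.1 :: p.2

/-- Value of a polynomial in an ai-semiring under a valuation:
the sum of the values of its words. -/
def SrPoly.eval {X : Type v} {S : Type u} [AISemiring S] (val : X → S) (p : SrPoly X) : S :=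
  (p.2.map (Word.eval val)).foldl (· + ·) (Word.eval val p.1)

/-- The content `c(p)`: the set of letters occurring in `p`. -/
def SrPoly.content {X : Type v} (p : SrPoly X) : Set X :=
  {x | ∃ w ∈ SrPoly.words p, x ∈ Word.letters w}

/-- A word viewed as a one-word polynomial. -/
def Word.toPoly {X : Type v} (w : Word X) : SrPoly X := (w, [])

/-- `p ≤_Σ q` : in every ai-semiring satisfying Σ, under every valuation,
the value of `p + q` equals the value of `p`. -/
def leSigma.{u, v} {X : Type v} (p q : SrPoly X) : Prop :=
  ∀ (S : Type u) [AISemiring S], SatSigma S → ∀ val : X → S,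
    SrPoly.eval val p + SrPoly.eval val q = SrPoly.eval val p

/-- `p ≈_Σ q` : in every ai-semiring satisfying Σ the values of `p` and `q` coincide. -/
def eqSigma.{u, v} {X : Type v} (p q : SrPoly X) : Prop :=
  ∀ (S : Type u) [AISemiring S], SatSigma S → ∀ val : X → S,
    SrPoly.eval val p = SrPoly.eval val q

/-- `w ≥_Σ p` for a word `w`. -/
def geSigmaWord.{u, v} {X : Type v} (w : Word X) (p : SrPoly X) : Prop :=
  leSigma.{u, v} p (Word.toPoly w)

/-- `x →_p y` : either `x = y` or some word `w ≥_Σ p` has an occurrence of `x`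
preceding an occurrence of `y`. -/
def arrow.{u, v} {X : Type v} (p : SrPoly X) (x y : X) : Prop :=
  x = y ∨ ∃ (w : Word X) (l₁ l₂ l₃ : List X),
    geSigmaWord.{u, v} w p ∧ Word.letters w = l₁ ++ x :: (l₂ ++ y :: l₃)

/-- `x` is rare in `p` : `x ∈ c(p)` and no word `w ≥_Σ p` contains two occurrences
of `x`. -/
def Rare.{u, v} {X : Type v} (p : SrPoly X) (x : X) : Prop :=
  x ∈ SrPoly.content p ∧
    ¬ ∃ (w : Word X) (l₁ l₂ l₃ : List X),
      geSigmaWord.{u, v} w p ∧ Word.letters w = l₁ ++ x :: (l₂ ++ x :: l₃)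

/-- `R(p)` : the set of letters rare in `p`. -/
def rares.{u, v} {X : Type v} (p : SrPoly X) : Set X := {x | Rare.{u, v} p x}

/-- `p` is degenerate if `R(p) = ∅`. -/
def Degenerate.{u, v} {X : Type v} (p : SrPoly X) : Prop := rares.{u, v} p = ∅

/-- `w^(2)` : the letterwise squaring of a word. -/
def Word.sq {X : Type v} (w : Word X) : Word X :=
  (w.1, w.1 :: List.foldr (fun x acc => x :: x :: acc) [] w.2)

/-- The word `w₁ w₂ w₃` where the outer parts `w₁`, `w₃` are (possibly empty) lists. -/
def joinWord {X : Type v} (l₁ : List X) (w : Word X) (l₃ : List X) : Word X :=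
  match l₁ with
  | [] => (w.1, w.2 ++ l₃)
  | a :: t => (a, t ++ Word.letters w ++ l₃)

/-- A chain in the poset `(R(p), →_p|R(p))`. -/
def IsChainIn.{u, v} {X : Type v} (p : SrPoly X) (C : Set X) : Prop :=
  C ⊆ rares.{u, v} p ∧ ∀ x ∈ C, ∀ y ∈ C, arrow.{u, v} p x y ∨ arrow.{u, v} p y x

/-- A maximal chain in the poset `(R(p), →_p|R(p))`. -/
def IsMaxChainIn.{u, v} {X : Type v} (p : SrPoly X) (C : Set X) : Prop :=
  IsChainIn.{u, v} p C ∧ ∀ D : Set X, IsChainIn.{u, v} p D → C ⊆ D → D = C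

/-- An antichain in the poset `(R(p), →_p|R(p))`. -/
def IsAntichainIn.{u, v} {X : Type v} (p : SrPoly X) (A : Set X) : Prop :=
  A ⊆ rares.{u, v} p ∧
    ∀ x ∈ A, ∀ y ∈ A, x ≠ y → ¬ arrow.{u, v} p x y ∧ ¬ arrow.{u, v} p y x

/-- A maximal antichain in the poset `(R(p), →_p|R(p))`. -/
def IsMaxAntichainIn.{u, v} {X : Type v} (p : SrPoly X) (A : Set X) : Prop :=
  IsAntichainIn.{u, v} p A ∧
    ∀ B : Set X, IsAntichainIn.{u, v} p B → A ⊆ B → B = A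

/-- The 4-element semiring `B0 = B₂ \ {e21}`. -/
inductive B0 : Type
  | zero | e11 | e12 | e22
  deriving DecidableEq

instance instFintypeB0 : Fintype B0 :=
  ⟨{B0.zero, B0.e11, B0.e12, B0.e22}, by intro x; cases x <;> decide⟩

/-- Addition in `B0`: `x + y = x` if `x = y` and `0` otherwise. -/
def B0.add : B0 → B0 → B0 := fun a b => if a = b then a else B0.zero

/-- Multiplication in `B0` (matrix units). -/
def B0.mul : B0 → B0 → B0
  | .e11, .e11 => .e11
  | .e22, .e22 => .e22
  | .e11, .e12 => .e12
  | .e12, .e22 => .e12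
  | _, _ => .zero

instance : AISemiring B0 where
  add := B0.add
  mul := B0.mul
  add_comm' := by decide
  add_assoc' := by decide
  add_idem' := by decide
  mul_assoc' := by decide
  left_distrib' := by decide
  right_distrib' := by decide

-- The valuation `val_{p,A}` associated with a maximal antichain `A` of
-- `(R(p), →_p|R(p))`.
open Classical in
noncomputable def valPA.{u, v} {X : Type v} (p : SrPoly X) (A : Set X) : X → B0 := fun x =>
  if x ∈ A then B0.e12
  else if ∃ y ∈ A, arrow.{u, v} p x y then B0.e11
  else B0.e22

/-- `B0` satisfies `xy + zy + zt ≤ xt`. -/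
theorem B0_satisfies_rook_monoid (a b c d : B0) :
    (a * b + c * b + c * d) + a * d = a * b + c * b + c * d := by
  revert a b c d
  decide
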